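/- arXiv:math/9911241 — 4 statements merged into one kernel-verified Lean document; each statement's English description precedes it below -/
import Mathlib

section
/- Let H be a finite abelian group and let β : H × H → ℚ/ℤ be a symmetric ℤ-bilinear form that is nondegenerate, i.e., if β(x, y) = 0 for all y ∈ H then x = 0. Let L be a subgroup of H with β(x, y) = 0 for all x, y ∈ L and (Nat.card L)^2 = Nat.card H. Then the quotient group H / L is isomorphic to L. -/
/-- Homomorphism groups are contravariantly functorial in the source along isomorphisms. -/
private def homCongrLeft {A B C : Type*} [AddCommGroup A] [AddCommGroup B]
    [AddCommGroup C] (e : A ≃+ B) : (A →+ C) ≃+ (B →+ C) where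
  toFun f := f.comp e.symm.toAddMonoidHom
  invFun f := f.comp e.toAddMonoidHom
  left_inv f := by ext x; simp
  right_inv f := by ext x; simp
  map_add' f g := by ext x; simp

private lemma zmod_hom_ext {n : ℕ} {M : Type*} [AddCommGroup M] {f g : ZMod n →+ M}
    (h : f 1 = g 1) : f = g := by
  ext x
  obtain ⟨m, rfl⟩ := ZMod.intCast_surjective x
  have hx : ((m : ℤ) : ZMod n) = m • (1 : ZMod n) := by simp
  rw [hx, map_zsmul, map_zsmul, h]

private lemma zmod_dual (n : ℕ) (hn : 0 < n) :
    Nonempty ((ZMod n →+ AddCircle (1 : ℚ)) ≃+ ZMod n) := by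
  have hn' : (n : ℚ) ≠ 0 := Nat.cast_ne_zero.mpr hn.ne'
  set c : AddCircle (1 : ℚ) := (((n : ℚ)⁻¹ : ℚ) : AddCircle (1 : ℚ)) with hc
  have hf : (zmultiplesHom (AddCircle (1 : ℚ)) c) ((n : ℤ)) = 0 := by
    rw [zmultiplesHom_apply, hc, ← AddCircle.coe_zsmul]
    have h1 : ((n : ℤ) • ((n : ℚ)⁻¹) : ℚ) = (1 : ℚ) := by
      rw [zsmul_eq_mul]; push_cast; field_simp
    rw [h1, AddCircle.coe_eq_zero_iff]
    exact ⟨1, one_smul _ _⟩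
  set χ₁ : ZMod n →+ AddCircle (1 : ℚ) := ZMod.lift n ⟨_, hf⟩ with hχ₁
  have hχ₁one : χ₁ 1 = c := by
    have h1 : ((1 : ℤ) : ZMod n) = 1 := by push_cast; rfl
    rw [hχ₁, ← h1, ZMod.lift_coe]
    simp
  have hΦ : ((zmultiplesHom (ZMod n →+ AddCircle (1 : ℚ)) χ₁) ((n : ℤ))) = 0 := by
    ext x
    have : ((n : ℤ) • χ₁) x = χ₁ ((n : ℤ) • x) := (map_zsmul χ₁ _ _).symm
    rw [zmultiplesHom_apply]
    rw [show ((n : ℤ) • χ₁) x = χ₁ ((n : ℤ) • x) from this]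
    have hz : ((n : ℤ) • x : ZMod n) = 0 := by
      rw [zsmul_eq_mul]; push_cast; rw [ZMod.natCast_self, zero_mul]
    rw [hz, map_zero, AddMonoidHom.zero_apply]
  set Φ : ZMod n →+ (ZMod n →+ AddCircle (1 : ℚ)) := ZMod.lift n ⟨_, hΦ⟩ with hΦdef
  have hΦcoe : ∀ m : ℤ, Φ ((m : ℤ) : ZMod n) = m • χ₁ := fun m => by
    rw [hΦdef, ZMod.lift_coe, zmultiplesHom_apply]
  have hΦone : ∀ m : ℤ, Φ ((m : ℤ) : ZMod n) 1 = ((m * (n : ℚ)⁻¹ : ℚ) : AddCircle (1 : ℚ)) := by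
    intro m
    rw [hΦcoe m]
    have : (m • χ₁) 1 = m • (χ₁ 1) := rfl
    rw [this, hχ₁one, hc, ← AddCircle.coe_zsmul, zsmul_eq_mul]
  have hinj : Function.Injective Φ := by
    intro a b hab
    obtain ⟨ma, rfl⟩ := ZMod.intCast_surjective a
    obtain ⟨mb, rfl⟩ := ZMod.intCast_surjective b
    have h1 : Φ ((ma - mb : ℤ) : ZMod n) 1 = 0 := by
      push_cast
      rw [map_sub, AddMonoidHom.sub_apply, hab, sub_self]
    rw [hΦone] at h1
    rw [AddCircle.coe_eq_zero_iff] at h1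
    obtain ⟨z, hz⟩ := h1
    have : ((ma - mb : ℤ) : ℚ) = z * n := by
      have : (z : ℚ) * 1 = (ma - mb : ℤ) * (n : ℚ)⁻¹ := by
        simpa [zsmul_eq_mul] using hz
      field_simp at this
      push_cast at this ⊢
      linarith [this]
    have hdvd : (n : ℤ) ∣ (ma - mb) := ⟨z, by exact_mod_cast (by linarith [this] : ((ma - mb : ℤ) : ℚ) = (n : ℚ) * z)⟩
    have := (ZMod.intCast_zmod_eq_zero_iff_dvd (ma - mb) n).mpr hdvd
    push_cast at this
    rw [sub_eq_zero] at this
    exact this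
  have hsurj : Function.Surjective Φ := by
    intro χ
    obtain ⟨q, hq⟩ := QuotientAddGroup.mk_surjective (χ 1)
    have hn0 : ((n : ℤ) • (χ 1)) = 0 := by
      rw [← map_zsmul]
      have : ((n : ℤ) • (1 : ZMod n)) = 0 := by
        rw [zsmul_eq_mul]; push_cast; rw [ZMod.natCast_self, mul_one]
      rw [this, map_zero]
    rw [← hq, ← AddCircle.coe_zsmul, AddCircle.coe_eq_zero_iff] at hn0
    obtain ⟨z, hz⟩ := hn0
    refine ⟨((z : ℤ) : ZMod n), zmod_hom_ext ?_⟩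
    rw [hΦone, ← hq]
    congr 1
    have hz' : (z : ℚ) = (n : ℚ) * q := by simpa [zsmul_eq_mul] using hz
    field_simp [hz']
    exact_mod_cast hz'
  exact ⟨(AddEquiv.ofBijective Φ ⟨hinj, hsurj⟩).symm⟩

private lemma dual_equiv (A : Type*) [AddCommGroup A] [Finite A] :
    Nonempty ((A →+ AddCircle (1 : ℚ)) ≃+ A) := by
  classical
  obtain ⟨ι, _, n, hn, ⟨e⟩⟩ := AddCommGroup.equiv_directSum_zmod_of_finite' A
  have e2 : A ≃+ ((i : ι) → ZMod (n i)) := e.trans (DirectSum.addEquivProd _)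
  have E := fun i => (zmod_dual (n i) (lt_trans one_pos (hn i))).some
  exact ⟨(homCongrLeft e2).trans <| (Pi.addMonoidHomAddEquiv _ _).trans <|
    (AddEquiv.piCongrRight E).trans e2.symm⟩

theorem stmt_3 {H : Type*} [AddCommGroup H] [Finite H]
    (β : H →+ H →+ AddCircle (1 : ℚ))
    (hsym : ∀ x y : H, β x y = β y x)
    (hnd : ∀ x : H, (∀ y : H, β x y = 0) → x = 0)
    (L : AddSubgroup H)
    (hL : ∀ x ∈ L, ∀ y ∈ L, β x y = 0)
    (hcard : (Nat.card L) ^ 2 = Nat.card H) :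
    Nonempty ((H ⧸ L) ≃+ L) := by
  classical
  obtain ⟨eH⟩ := dual_equiv H
  obtain ⟨eL⟩ := dual_equiv L
  have finH : Finite (H →+ AddCircle (1 : ℚ)) := Finite.of_equiv _ eH.symm.toEquiv
  have finL : Finite (L →+ AddCircle (1 : ℚ)) := Finite.of_equiv _ eL.symm.toEquiv
  -- β is bijective
  have hinj : Function.Injective β := by
    intro x y h
    have hsub : x - y = 0 := hnd (x - y) (fun z => by
      rw [map_sub, AddMonoidHom.sub_apply, h, sub_self])
    rwa [sub_eq_zero] at hsub
  have hbij : Function.Bijective β :=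
    (Nat.bijective_iff_injective_and_card β).2
      ⟨hinj, (Nat.card_congr eH.toEquiv).symm⟩
  -- the map φ : H →+ (L →+ C), restriction of β
  set φ : H →+ (L →+ AddCircle (1 : ℚ)) :=
    { toFun := fun x => (β x).comp L.subtype
      map_zero' := by ext y; simp
      map_add' := fun x y => by ext z; simp } with hφdef
  -- φ is surjective
  have hres : Function.Surjective
      (CharacterModule.dual ((AddSubgroup.toIntSubmodule L).subtype)) :=
    CharacterModule.dual_surjective_of_injective _ Subtype.val_injective
  have hφsurj : Function.Surjective φ := by
    intro χ
    obtain ⟨ψ, hψ⟩ := hres χ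
    obtain ⟨x, hx⟩ := hbij.2 ψ
    refine ⟨x, ?_⟩
    ext y
    have := congrArg (fun f => f y) hψ
    simp [hφdef, hx] at this ⊢
    exact this
  -- kernel of φ is L
  have hLle : L ≤ φ.ker := by
    intro x hx
    rw [AddMonoidHom.mem_ker]
    ext y
    simpa [hφdef] using hL x hx y y.2
  have hq : Nonempty ((H ⧸ φ.ker) ≃+ (L →+ AddCircle (1 : ℚ))) :=
    ⟨QuotientAddGroup.quotientKerEquivOfSurjective φ hφsurj⟩
  have hcardHom : Nat.card (L →+ AddCircle (1 : ℚ)) = Nat.card L := Nat.card_congr eL.toEquiv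
  have hcardH : Nat.card H = Nat.card φ.ker * Nat.card L := by
    rw [AddSubgroup.card_eq_card_quotient_mul_card_addSubgroup φ.ker,
      Nat.card_congr hq.some.toEquiv, hcardHom, mul_comm]
  have hLpos : 0 < Nat.card L := Nat.card_pos
  have hkcard : Nat.card φ.ker = Nat.card L := by
    have : Nat.card L * Nat.card L = Nat.card φ.ker * Nat.card L := by
      rw [← hcardH, ← hcard]; ring
    exact (Nat.eq_of_mul_eq_mul_right hLpos this).symm
  have hker : L = φ.ker :=
    AddSubgroup.eq_of_le_of_card_ge hLle (le_of_eq hkcard)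
  exact ⟨(QuotientAddGroup.quotientAddEquivOfEq hker).trans (hq.some.trans eL)⟩
end

section
/- Let q be an odd positive integer, let z be a complex number with z^q = 1, let N be a positive integer, let k' be a natural number with k' ≤ N, and let α : Fin k' → ℤ be any family of integers. Then (N : ℂ) + Σ_{i} z^(α i) ≠ 0. -/
theorem stmt_5 (q : ℕ) (hq : Odd q) (hq0 : 0 < q) (z : ℂ) (hz : z ^ q = 1)
    (N : ℕ) (hN : 0 < N) (k' : ℕ) (hk' : k' ≤ N) (α : Fin k' → ℤ) :
    (N : ℂ) + ∑ i, z ^ (α i) ≠ 0 := by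
  have hz0 : z ≠ 0 := by
    intro h
    rw [h, zero_pow hq0.ne'] at hz
    exact one_ne_zero hz.symm
  have habsz : ‖z‖ = 1 := by
    have h1 : ‖z‖ ^ q = 1 := by rw [← norm_pow, hz, norm_one]
    rcases pow_eq_one_iff_cases.mp h1 with h | h | h
    · omega
    · exact h
    · exact absurd h.2 (by simpa using hq)
  have habs : ∀ i : Fin k', ‖z ^ α i‖ = 1 := by
    intro i
    rw [norm_zpow, habsz, one_zpow]
  have hre : ∀ i : Fin k', -1 ≤ (z ^ α i).re := by
    intro i
    have := Complex.abs_re_le_norm (z ^ α i)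
    rw [habs i] at this
    linarith [neg_abs_le (z ^ α i).re]
  intro h
  have h' : (N : ℝ) + ∑ i, (z ^ α i).re = 0 := by
    have := congrArg Complex.re h
    simpa [Complex.re_sum] using this
  have hsum : ∑ i : Fin k', (z ^ α i).re = -(N : ℝ) := by linarith
  have hge : -(k' : ℝ) ≤ ∑ i : Fin k', (z ^ α i).re := by
    calc -(k' : ℝ) = ∑ _i : Fin k', (-1 : ℝ) := by simp
    _ ≤ _ := Finset.sum_le_sum (fun i _ => hre i)
  have hkN : (N : ℝ) ≤ (k' : ℝ) := by linarith
  have hk0 : 0 < k' := by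
    by_contra hc
    push_neg at hc
    interval_cases k'
    simp at h'
    have : (0:ℝ) < N := by exact_mod_cast hN
    linarith
  have hall : ∀ i : Fin k', (z ^ α i).re = -1 := by
    by_contra hc
    push_neg at hc
    obtain ⟨i, hi⟩ := hc
    have hstrict : ∑ _i : Fin k', (-1 : ℝ) < ∑ i : Fin k', (z ^ α i).re := by
      apply Finset.sum_lt_sum (fun j _ => hre j)
      exact ⟨i, Finset.mem_univ i, lt_of_le_of_ne (hre i) (Ne.symm hi)⟩
    simp only [Finset.sum_const, Finset.card_univ, Fintype.card_fin, nsmul_eq_mul,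
      mul_neg_one] at hstrict
    have hkN' : (k' : ℝ) ≤ (N : ℝ) := by exact_mod_cast hk'
    linarith
  obtain ⟨i⟩ := Fin.pos_iff_nonempty.mp hk0
  have him : (z ^ α i).im = 0 := by
    have h2 := Complex.sq_norm (z ^ α i)
    rw [habs i, Complex.normSq_apply] at h2
    nlinarith [hall i]
  have hw : z ^ α i = -1 := by
    apply Complex.ext
    · simpa using hall i
    · simpa using him
  have hpow : (z ^ α i) ^ q = 1 := by
    rw [← zpow_natCast, ← zpow_mul, mul_comm, zpow_mul, zpow_natCast, hz, one_zpow]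
  rw [hw, hq.neg_one_pow] at hpow
  exact (by norm_num : (-1 : ℂ) ≠ 1) hpow
end

section
/- Let q be an odd positive integer, let N be a positive integer, let k' be a natural number with k' ≤ N, and let a : Fin k' → ℕ. Then the polynomial f = C (N : ℚ) + Σ_i X^(a i) and the polynomial X^q - 1 are coprime in the polynomial ring ℚ[X] (i.e., IsCoprime f (X^q - 1)). -/
open Polynomial in
theorem stmt_6 (q : ℕ) (hq : Odd q) (hq0 : 0 < q) (N : ℕ) (hN : 0 < N)
    (k' : ℕ) (hk' : k' ≤ N) (a : Fin k' → ℕ) :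
    IsCoprime (C (N : ℚ) + ∑ i, (X : ℚ[X]) ^ (a i)) ((X : ℚ[X]) ^ q - 1) := by
  refine (Polynomial.isCoprime_iff_aeval_ne_zero_of_isAlgClosed (k := ℚ) ℂ _ _).mpr fun z => ?_
  by_contra h
  push_neg at h
  obtain ⟨h1, h2⟩ := h
  simp only [map_add, map_sum, map_pow, map_sub, map_one, aeval_C, aeval_X, map_natCast] at h1 h2
  have hzq : z ^ q = 1 := by linear_combination h2
  -- |z| = 1
  have habs : ‖z‖ = 1 := by
    have : ‖z‖ ^ q = 1 := by
      rw [← norm_pow, hzq, norm_one]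
    rcases (pow_eq_one_iff_of_ne_zero hq0.ne').mp this with h | ⟨h, he⟩
    · exact h
    · exact absurd he (Nat.not_even_iff_odd.mpr hq)
  have habsi : ∀ i : Fin k', ‖z ^ a i‖ = 1 := fun i => by
    rw [norm_pow, habs, one_pow]
  -- sum of powers equals -N
  have hsum : ∑ i : Fin k', z ^ a i = -(N : ℂ) := by linear_combination h1
  -- real parts
  have hre : ∑ i : Fin k', (z ^ a i).re = -(N : ℝ) := by
    have := congrArg Complex.re hsum
    simpa using this
  have hrege : ∀ i : Fin k', -1 ≤ (z ^ a i).re := fun i => by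
    have := Complex.abs_re_le_norm (z ^ a i)
    rw [habsi i] at this
    have := abs_le.mp this
    linarith [this.1]
  have hlow : -(k' : ℝ) ≤ ∑ i : Fin k', (z ^ a i).re := by
    calc -(k' : ℝ) = ∑ _i : Fin k', (-1 : ℝ) := by simp
    _ ≤ _ := Finset.sum_le_sum fun i _ => hrege i
  have hkN : (k' : ℝ) = (N : ℝ) := by
    have h1 : (N : ℝ) ≤ (k' : ℝ) := by linarith [hlow, hre.ge, hre.le]
    have h2 : (k' : ℝ) ≤ (N : ℝ) := by exact_mod_cast hk'
    linarith
  have hall : ∀ i ∈ Finset.univ, ((-1 : ℝ)) = (z ^ a i).re := by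
    rw [← Finset.sum_eq_sum_iff_of_le (fun i _ => hrege i)]
    rw [hre]
    simp [hkN]
  have hk'N : k' = N := by exact_mod_cast hkN
  have hk0 : 0 < k' := hk'N ▸ hN
  set i : Fin k' := ⟨0, hk0⟩
  have hrei : (z ^ a i).re = -1 := (hall i (Finset.mem_univ i)).symm
  have him : (z ^ a i).im = 0 := by
    have hsq : (z ^ a i).re ^ 2 + (z ^ a i).im ^ 2 = 1 := by
      have := Complex.sq_norm (z ^ a i)
      rw [habsi i, Complex.normSq_apply] at this
      linear_combination -this
    nlinarith [sq_nonneg (z ^ a i).im]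
  have hzi : z ^ a i = -1 := by
    apply Complex.ext <;> simp [hrei, him]
  have : ((-1 : ℂ)) ^ q = 1 := by
    rw [← hzi, ← pow_mul, mul_comm, pow_mul, hzq, one_pow]
  rw [hq.neg_one_pow] at this
  norm_num at this
end

section
/- Let p be a prime and let n, d be positive integers. Then every ZMod (p^n)-submodule L of the free module (ZMod (p^n))^d admits a generating set of the following echelon form: there exist a natural number m ≤ d, an injective map τ : Fin m → Fin d, a monotone nondecreasing sequence of natural numbers i_1 ≤ i_2 ≤ … ≤ i_m with each i_j ≤ n - 1, and elements v_1, …, v_m generating L such that for each j: the τ(j)-th coordinate of v_j equals p^(i_j), the τ(j')-th coordinate of v_j equals 0 for every j' < j, and every coordinate of v_j is divisible by p^(i_j) (i.e., lies in p^(i_j)·(ZMod (p^n))). -/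
/-!
Work over a commutative ring in which every nonzero element is a unit multiple of a power of `π`
(for `ZMod (p ^ n)` take `π = p`). Choose a coordinate `t` of an element of `L` of minimal
valuation `k` and rescale that element `w` so that `w t = π ^ k`. Then `π ^ k` divides every
coordinate of every element of `L`, so `L` is spanned by `w` and the elements of `L` vanishing
at `t`; the latter have smaller support, and induction on the support yields the echelon
generators, with nondecreasing exponents by minimality of `k`.
-/

open Submodule LinearMap

section Echelon

variable {R ι : Type*} [CommRing R]

structure IsPowEchelon (π : R) (L : Submodule R (ι → R)) {m : ℕ} (τ : Fin m → ι) (i : Fin m → ℕ)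
    (v : Fin m → ι → R) : Prop where
  injective : Function.Injective τ
  monotone : Monotone i
  span_eq : span R (Set.range v) = L
  pivot : ∀ j, v j (τ j) = π ^ i j
  pow_ne_zero : ∀ j, π ^ i j ≠ 0
  echelon : ∀ j j', j' < j → v j (τ j') = 0
  pow_dvd : ∀ j t, π ^ i j ∣ v j t

variable {π : R}

theorem IsPowEchelon.mem {L : Submodule R (ι → R)} {m : ℕ} {τ : Fin m → ι} {i : Fin m → ℕ}
    {v : Fin m → ι → R} (h : IsPowEchelon π L τ i v) (j : Fin m) : v j ∈ L :=
  h.span_eq ▸ subset_span ⟨j, rfl⟩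

theorem isPowEchelon_bot :
    IsPowEchelon π (⊥ : Submodule R (ι → R)) Fin.elim0 Fin.elim0 Fin.elim0 where
  injective j := j.elim0
  monotone j := j.elim0
  span_eq := by simp
  pivot j := j.elim0
  pow_ne_zero j := j.elim0
  echelon j := j.elim0
  pow_dvd j := j.elim0

theorem span_singleton_sup_inf_ker_proj {L : Submodule R (ι → R)} {w : ι → R} {t : ι} {a : R}
    (hw : w ∈ L) (hwt : w t = a) (hdvd : ∀ y ∈ L, a ∣ y t) :
    R ∙ w ⊔ L ⊓ ker (proj t) = L := by
  refine le_antisymm (sup_le ((span_singleton_le_iff_mem _ _).2 hw) inf_le_left) fun y hy ↦ ?_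
  obtain ⟨c, hc⟩ := hdvd y hy
  have hrest : y - c • w ∈ L ⊓ ker (proj t) :=
    ⟨L.sub_mem hy (L.smul_mem c hw), by simp [hc, hwt, mul_comm]⟩
  simpa using add_mem_sup (mem_span_singleton.2 ⟨c, rfl⟩ : c • w ∈ R ∙ w) hrest

theorem IsPowEchelon.cons {L : Submodule R (ι → R)} {m : ℕ} {τ : Fin m → ι} {i : Fin m → ℕ}
    {v : Fin m → ι → R} {t : ι} {k : ℕ} {w : ι → R}
    (h : IsPowEchelon π (L ⊓ ker (proj t)) τ i v) (hw : w ∈ L) (hwt : w t = π ^ k)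
    (hk : π ^ k ≠ 0) (hdvd : ∀ y ∈ L, ∀ s, π ^ k ∣ y s) (hle : ∀ j, k ≤ i j) :
    IsPowEchelon π L (Fin.cons t τ) (Fin.cons k i) (Fin.cons w v) := by
  have hvt (j : Fin m) : v j t = 0 := (h.mem j).2
  refine ⟨?_, ?_, ?_, ?_, ?_, ?_, ?_⟩
  · refine Fin.cons_injective_iff.2 ⟨?_, h.injective⟩
    rintro ⟨j, hj⟩
    exact h.pow_ne_zero j (h.pivot j ▸ hj ▸ hvt j)
  · exact monotone_iff_forall_lt.2 <|
      (Fin.liftFun_cons (· ≤ ·)).2 ⟨hle, monotone_iff_forall_lt.1 h.monotone⟩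
  · rw [Fin.range_cons, span_insert, h.span_eq]
    exact span_singleton_sup_inf_ker_proj hw hwt fun y hy ↦ hdvd y hy t
  · intro j
    cases j using Fin.cases with
    | zero => exact hwt
    | succ j => exact h.pivot j
  · intro j
    cases j using Fin.cases with
    | zero => exact hk
    | succ j => exact h.pow_ne_zero j
  · intro j j' hj
    cases j using Fin.cases with
    | zero => exact absurd hj (Fin.not_lt_zero j')
    | succ j =>
      cases j' using Fin.cases with
      | zero => exact hvt j
      | succ j' => exact h.echelon j j' (Fin.succ_lt_succ_iff.1 hj)
  · intro j
    cases j using Fin.cases with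
    | zero => exact hdvd w hw
    | succ j => exact h.pow_dvd j

theorem exists_pivot (hπ : ∀ x : R, x ≠ 0 → ∃ k, Associated (π ^ k) x)
    {L : Submodule R (ι → R)} (hL : L ≠ ⊥) :
    ∃ k, ∃ w ∈ L, ∃ t, w t = π ^ k ∧ π ^ k ≠ 0 ∧ (∀ y ∈ L, ∀ s, π ^ k ∣ y s) ∧
      ∀ y ∈ L, ∀ s l, y s = π ^ l → π ^ l ≠ 0 → k ≤ l := by
  classical
  have hex : ∃ k, ∃ x ∈ L, ∃ t, x t ≠ 0 ∧ Associated (π ^ k) (x t) := by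
    obtain ⟨x, hx, hx0⟩ := L.ne_bot_iff.1 hL
    obtain ⟨t, ht⟩ := Function.ne_iff.1 hx0
    exact (hπ _ ht).imp fun k hk ↦ ⟨x, hx, t, ht, hk⟩
  obtain ⟨x, hx, t, hxt, u, hu⟩ := Nat.find_spec hex
  have hmin (y) (hy : y ∈ L) (s) (hys : y s ≠ 0) (l) (hl : Associated (π ^ l) (y s)) :
      Nat.find hex ≤ l :=
    Nat.find_min' hex ⟨y, hy, s, hys, hl⟩
  refine ⟨Nat.find hex, (↑u⁻¹ : R) • x, L.smul_mem _ hx, t, ?_, ?_, ?_, ?_⟩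
  · simp [← hu, mul_comm]
  · exact fun h ↦ hxt (by simp [← hu, h])
  · intro y hy s
    by_cases hys : y s = 0
    · simp [hys]
    obtain ⟨l, hl⟩ := hπ _ hys
    exact (pow_dvd_pow π (hmin y hy s hys l hl)).trans hl.dvd
  · intro y hy s l hys hl
    exact hmin y hy s (hys ▸ hl) l (hys ▸ Associated.refl _)

theorem exists_isPowEchelon_of_support_subset (hπ : ∀ x : R, x ≠ 0 → ∃ k, Associated (π ^ k) x)
    (S : Finset ι) (L : Submodule R (ι → R)) (hS : ∀ x ∈ L, ∀ t ∉ S, x t = 0) :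
    ∃ (m : ℕ) (τ : Fin m → ι) (i : Fin m → ℕ) (v : Fin m → ι → R), IsPowEchelon π L τ i v := by
  classical
  induction S using Finset.strongInduction generalizing L with
  | H S ih =>
    by_cases hL : L = ⊥
    · exact ⟨0, _, _, _, hL ▸ isPowEchelon_bot⟩
    obtain ⟨k, w, hw, t, hwt, hk, hdvd, hmin⟩ := exists_pivot hπ hL
    have htS : t ∈ S := by
      by_contra htS
      exact hk (hwt ▸ hS w hw t htS)
    obtain ⟨m, τ, i, v, h⟩ := ih (S.erase t) (Finset.erase_ssubset htS) (L ⊓ ker (proj t))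
      fun x hx s hs ↦ by
        by_cases hst : s = t
        · exact hst ▸ hx.2
        · exact hS x hx.1 s fun h ↦ hs (Finset.mem_erase.2 ⟨hst, h⟩)
    exact ⟨m + 1, _, _, _,
      h.cons hw hwt hk hdvd fun j ↦ hmin _ (h.mem j).1 _ _ (h.pivot j) (h.pow_ne_zero j)⟩

theorem exists_isPowEchelon [Fintype ι] (hπ : ∀ x : R, x ≠ 0 → ∃ k, Associated (π ^ k) x)
    (L : Submodule R (ι → R)) :
    ∃ (m : ℕ) (τ : Fin m → ι) (i : Fin m → ℕ) (v : Fin m → ι → R), IsPowEchelon π L τ i v :=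
  exists_isPowEchelon_of_support_subset hπ Finset.univ L fun _ _ t ht ↦
    absurd (Finset.mem_univ t) ht

end Echelon

namespace ZMod

theorem exists_associated_pow_of_ne_zero {p n : ℕ} (hp : p.Prime) {x : ZMod (p ^ n)}
    (hx : x ≠ 0) :
    ∃ k, Associated ((p : ZMod (p ^ n)) ^ k) x := by
  have : NeZero (p ^ n) := ⟨pow_ne_zero n hp.ne_zero⟩
  obtain ⟨k, b, hpb, hb⟩ := Nat.exists_eq_pow_mul_and_not_dvd (x.val_ne_zero.2 hx) p hp.ne_one
  have hcop : b.Coprime (p ^ n) := ((hp.coprime_iff_not_dvd.2 hpb).symm).pow_right n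
  refine ⟨k, unitOfCoprime b hcop, ?_⟩
  rw [coe_unitOfCoprime, ← natCast_zmod_val x, hb]
  push_cast
  rfl

theorem lt_of_natCast_pow_ne_zero {p n k : ℕ} (h : (p : ZMod (p ^ n)) ^ k ≠ 0) : k < n := by
  by_contra! hnk
  exact h (pow_eq_zero_of_le hnk (by rw [← Nat.cast_pow, natCast_self]))

end ZMod

theorem stmt_9_general (p n d : ℕ) (hp : p.Prime)
    (L : Submodule (ZMod (p ^ n)) (Fin d → ZMod (p ^ n))) :
    ∃ (m : ℕ), m ≤ d ∧
      ∃ (τ : Fin m → Fin d) (i : Fin m → ℕ) (v : Fin m → (Fin d → ZMod (p ^ n))),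
        Function.Injective τ ∧
        Monotone i ∧
        (∀ j : Fin m, i j ≤ n - 1) ∧
        Submodule.span (ZMod (p ^ n)) (Set.range v) = L ∧
        (∀ j : Fin m, v j (τ j) = (p : ZMod (p ^ n)) ^ (i j)) ∧
        (∀ j j' : Fin m, j' < j → v j (τ j') = 0) ∧
        (∀ j : Fin m, ∀ t : Fin d, ∃ u : ZMod (p ^ n),
          v j t = (p : ZMod (p ^ n)) ^ (i j) * u) := by
  obtain ⟨m, τ, i, v, h⟩ :=
    exists_isPowEchelon (fun _ hx ↦ ZMod.exists_associated_pow_of_ne_zero hp hx) L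
  refine ⟨m, ?_, τ, i, v, h.injective, h.monotone, fun j ↦ ?_, h.span_eq, h.pivot, h.echelon,
    h.pow_dvd⟩
  · simpa using Fintype.card_le_of_injective τ h.injective
  · have := ZMod.lt_of_natCast_pow_ne_zero (h.pow_ne_zero j)
    omega

theorem stmt_9 (p n d : ℕ) (hp : p.Prime) (hn : 0 < n) (hd : 0 < d)
    (L : Submodule (ZMod (p ^ n)) (Fin d → ZMod (p ^ n))) :
    ∃ (m : ℕ), m ≤ d ∧
      ∃ (τ : Fin m → Fin d) (i : Fin m → ℕ) (v : Fin m → (Fin d → ZMod (p ^ n))),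
        Function.Injective τ ∧
        Monotone i ∧
        (∀ j : Fin m, i j ≤ n - 1) ∧
        Submodule.span (ZMod (p ^ n)) (Set.range v) = L ∧
        (∀ j : Fin m, v j (τ j) = (p : ZMod (p ^ n)) ^ (i j)) ∧
        (∀ j j' : Fin m, j' < j → v j (τ j') = 0) ∧
        (∀ j : Fin m, ∀ t : Fin d, ∃ u : ZMod (p ^ n),
          v j t = (p : ZMod (p ^ n)) ^ (i j) * u) :=
  stmt_9_general p n d hp L
end
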